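/- arXiv:2305.13743 — 3 statements merged into one kernel-verified Lean document; each statement's English description precedes it below -/
import Mathlib

section
/- Let n be a positive integer and let S₁, …, S_n be i.i.d. real random variables such that n·S_i has the chi-square distribution χ²_n with n degrees of freedom. Then for every ε ∈ (0,1), P( |max_{1 ≤ i ≤ n} S_i − 1| > ε ) ≤ (n+1)·exp( −n·ε²/(4(1+ε)) ). -/
/-!
Chernoff bounds. The moment generating function of `Γ(a, r)` is `(r / (r - t)) ^ a` for `t < r`.
For `X = χ²ₖ / k` the optimal exponents give `P(X > 1 + ε) ≤ ((1 + ε) e^{-ε})^{k/2}` and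
`P(X < 1 - ε) ≤ ((1 - ε) e^{ε})^{k/2}`, and the elementary bounds
`log (1 + ε) ≤ ε - ε² / (2 (1 + ε))` (from `x ≤ sinh x`) and `log (1 - ε) ≤ -ε - ε² / 2`
turn these into `exp (-k ε² / (4 (1 + ε)))` and `exp (-k ε² / 4)`. The maximum exceeds `1 + ε`
only if some `Sᵢ` does, and falls below `1 - ε` only if a fixed `S_{i₀}` does: a union bound
over `n + 1` events.
-/

open MeasureTheory ProbabilityTheory Set Real

lemma gammaPDFReal_mul_exp {a r t : ℝ} (hr : 0 ≤ r) (ht : t < r) (x : ℝ) :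
    gammaPDFReal a r x * exp (t * x) = (r / (r - t)) ^ a * gammaPDFReal a (r - t) x := by
  have hrt : 0 < r - t := by linarith
  unfold gammaPDFReal
  split_ifs
  · have hpow : (r / (r - t)) ^ a * (r - t) ^ a = r ^ a := by
      rw [← mul_rpow (div_nonneg hr hrt.le) hrt.le, div_mul_cancel₀ _ hrt.ne']
    have hexp : exp (-(r * x)) * exp (t * x) = exp (-((r - t) * x)) := by
      rw [← exp_add]; ring_nf
    rw [← hexp, ← hpow]
    ring
  · simp

lemma lintegral_exp_mul_gammaMeasure {a r t : ℝ} (ha : 0 < a) (hr : 0 < r) (ht : t < r) :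
    ∫⁻ x, ENNReal.ofReal (exp (t * x)) ∂gammaMeasure a r = ENNReal.ofReal ((r / (r - t)) ^ a) := by
  have hrt : 0 < r - t := by linarith
  have hdensity : ∀ x, gammaPDF a r x * ENNReal.ofReal (exp (t * x)) =
      ENNReal.ofReal ((r / (r - t)) ^ a) * gammaPDF a (r - t) x := fun x => by
    rw [gammaPDF, gammaPDF, ← ENNReal.ofReal_mul (gammaPDFReal_nonneg ha hr x),
      ← ENNReal.ofReal_mul (by positivity), gammaPDFReal_mul_exp hr.le ht]
  have hpdf : Measurable (gammaPDF a r) := (measurable_gammaPDFReal a r).ennreal_ofReal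
  have hexp : Measurable fun x : ℝ => ENNReal.ofReal (exp (t * x)) := by fun_prop
  rw [gammaMeasure, lintegral_withDensity_eq_lintegral_mul _ hpdf hexp]
  simp only [Pi.mul_apply, hdensity]
  rw [lintegral_const_mul' _ _ ENNReal.ofReal_ne_top, lintegral_gammaPDF_eq_one ha hrt, mul_one]

/-- Chernoff's bound; writing the event as `t * c ≤ t * x` covers both tails (`t ≥ 0`, `t ≤ 0`). -/
lemma measure_le_exp_mul_lintegral_exp (μ : Measure ℝ) (t c : ℝ) :
    μ {x | t * c ≤ t * x} ≤
      ENNReal.ofReal (exp (-(t * c))) * ∫⁻ x, ENNReal.ofReal (exp (t * x)) ∂μ := by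
  have hs : MeasurableSet {x : ℝ | t * c ≤ t * x} := measurableSet_le (by fun_prop) (by fun_prop)
  calc μ {x | t * c ≤ t * x} = ∫⁻ x, {x | t * c ≤ t * x}.indicator 1 x ∂μ :=
        (lintegral_indicator_one hs).symm
    _ ≤ ∫⁻ x, ENNReal.ofReal (exp (-(t * c)) * exp (t * x)) ∂μ := by
        refine lintegral_mono fun x => ?_
        by_cases hx : t * c ≤ t * x
        · rw [indicator_of_mem (show x ∈ {x | t * c ≤ t * x} from hx), Pi.one_apply, ← exp_add]
          exact ENNReal.one_le_ofReal.mpr (one_le_exp (by linarith))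
        · rw [indicator_of_notMem (show x ∉ {x | t * c ≤ t * x} from hx)]
          exact zero_le
    _ = _ := by
        simp only [ENNReal.ofReal_mul (exp_nonneg _)]
        exact lintegral_const_mul' _ _ ENNReal.ofReal_ne_top

lemma gammaMeasure_le_exp_mul_rpow {a r t : ℝ} (ha : 0 < a) (hr : 0 < r) (ht : t < r) (c : ℝ) :
    gammaMeasure a r {x | t * c ≤ t * x} ≤ ENNReal.ofReal (exp (-(t * c)) * (r / (r - t)) ^ a) := by
  rw [ENNReal.ofReal_mul (exp_nonneg _), ← lintegral_exp_mul_gammaMeasure ha hr ht]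
  exact measure_le_exp_mul_lintegral_exp _ t c

lemma log_le_half_sub_inv {x : ℝ} (hx : 1 ≤ x) : log x ≤ (x - x⁻¹) / 2 := by
  rw [← sinh_log (by linarith)]
  exact self_le_sinh_iff.mpr (log_nonneg hx)

lemma log_one_sub_le {ε : ℝ} (h0 : 0 ≤ ε) (h1 : ε < 1) : log (1 - ε) ≤ -(ε + ε ^ 2 / 2) := by
  have hsum := hasSum_pow_div_log_of_abs_lt_one (by rw [abs_of_nonneg h0]; exact h1)
  have := sum_le_hasSum (Finset.range 2) (fun i _ => by positivity) hsum
  norm_num [Finset.sum_range_succ] at this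
  linarith

lemma gammaMeasure_Ioi_one_add_le {k ε : ℝ} (hk : 0 < k) (hε : 0 ≤ ε) :
    gammaMeasure (k / 2) (1 / 2) (Ioi (k * (1 + ε))) ≤
      ENNReal.ofReal (exp (-(k * ε ^ 2) / (4 * (1 + ε)))) := by
  set t := ε / (2 * (1 + ε)) with ht_def
  have ht : t < 1 / 2 := by
    rw [div_lt_iff₀ (by positivity)]
    linarith
  have hsub : Ioi (k * (1 + ε)) ⊆ {x | t * (k * (1 + ε)) ≤ t * x} := fun x hx =>
    mul_le_mul_of_nonneg_left (le_of_lt hx) (by positivity : (0 : ℝ) ≤ t)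
  refine (measure_mono hsub).trans ((gammaMeasure_le_exp_mul_rpow (by positivity)
    (by norm_num) ht _).trans (ENNReal.ofReal_le_ofReal ?_))
  have hratio : 1 / 2 / (1 / 2 - t) = 1 + ε := by
    rw [ht_def]
    field_simp
    ring
  have hexponent : t * (k * (1 + ε)) = k * ε / 2 := by
    rw [ht_def]
    field_simp
  rw [hratio, hexponent, rpow_def_of_pos (by linarith), ← exp_add, exp_le_exp]
  have hlog := log_le_half_sub_inv (by linarith : (1 : ℝ) ≤ 1 + ε)
  have hid : k / 2 * ((1 + ε - (1 + ε)⁻¹) / 2) - k * ε / 2 = -(k * ε ^ 2) / (4 * (1 + ε)) := by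
    field_simp
    ring
  nlinarith [mul_le_mul_of_nonneg_left hlog (by positivity : (0 : ℝ) ≤ k / 2)]

lemma gammaMeasure_Iio_one_sub_le {k ε : ℝ} (hk : 0 < k) (hε0 : 0 ≤ ε) (hε1 : ε < 1) :
    gammaMeasure (k / 2) (1 / 2) (Iio (k * (1 - ε))) ≤ ENNReal.ofReal (exp (-(k * ε ^ 2) / 4)) := by
  have hε : 0 < 1 - ε := by linarith
  set t := -(ε / (2 * (1 - ε))) with ht_def
  have hpos : 0 ≤ ε / (2 * (1 - ε)) := by positivity
  have ht : t < 1 / 2 := by linarith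
  have hsub : Iio (k * (1 - ε)) ⊆ {x | t * (k * (1 - ε)) ≤ t * x} := fun x hx =>
    mul_le_mul_of_nonpos_left (le_of_lt hx) (by linarith : t ≤ 0)
  refine (measure_mono hsub).trans ((gammaMeasure_le_exp_mul_rpow (by positivity)
    (by norm_num) ht _).trans (ENNReal.ofReal_le_ofReal ?_))
  have hratio : 1 / 2 / (1 / 2 - t) = 1 - ε := by
    rw [ht_def]
    field_simp
    ring
  have hexponent : -(t * (k * (1 - ε))) = k * ε / 2 := by
    rw [ht_def]
    field_simp
  rw [hratio, hexponent, rpow_def_of_pos hε, ← exp_add, exp_le_exp]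
  nlinarith [mul_le_mul_of_nonneg_left (log_one_sub_le hε0 hε1)
    (by positivity : (0 : ℝ) ≤ k / 2)]

section NormalizedChiSquare

variable {Ω : Type*} [MeasurableSpace Ω] {μ : Measure Ω} {X : Ω → ℝ} {k ε : ℝ}

lemma measure_const_mul_preimage_of_map_eq_gammaMeasure (hk : 0 < k)
    (hX : μ.map (fun ω => k * X ω) = gammaMeasure (k / 2) (1 / 2))
    {s : Set ℝ} (hs : MeasurableSet s) :
    μ ((fun ω => k * X ω) ⁻¹' s) = gammaMeasure (k / 2) (1 / 2) s := by
  have : IsProbabilityMeasure (gammaMeasure (k / 2) (1 / 2)) :=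
    isProbabilityMeasure_gammaMeasure (by positivity) (by norm_num)
  rw [← hX, Measure.map_apply_of_aemeasurable
    (.of_map_ne_zero (hX ▸ IsProbabilityMeasure.ne_zero _)) hs]

lemma measure_one_add_lt_le (hk : 0 < k) (hε : 0 ≤ ε)
    (hX : μ.map (fun ω => k * X ω) = gammaMeasure (k / 2) (1 / 2)) :
    μ {ω | 1 + ε < X ω} ≤ ENNReal.ofReal (exp (-(k * ε ^ 2) / (4 * (1 + ε)))) := by
  have hpre : {ω | 1 + ε < X ω} = (fun ω => k * X ω) ⁻¹' Ioi (k * (1 + ε)) := by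
    ext ω
    simp [mul_lt_mul_iff_right₀ hk]
  rw [hpre, measure_const_mul_preimage_of_map_eq_gammaMeasure hk hX measurableSet_Ioi]
  exact gammaMeasure_Ioi_one_add_le hk hε

lemma measure_lt_one_sub_le (hk : 0 < k) (hε0 : 0 ≤ ε) (hε1 : ε < 1)
    (hX : μ.map (fun ω => k * X ω) = gammaMeasure (k / 2) (1 / 2)) :
    μ {ω | X ω < 1 - ε} ≤ ENNReal.ofReal (exp (-(k * ε ^ 2) / 4)) := by
  have hpre : {ω | X ω < 1 - ε} = (fun ω => k * X ω) ⁻¹' Iio (k * (1 - ε)) := by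
    ext ω
    simp [mul_lt_mul_iff_right₀ hk]
  rw [hpre, measure_const_mul_preimage_of_map_eq_gammaMeasure hk hX measurableSet_Iio]
  exact gammaMeasure_Iio_one_sub_le hk hε0 hε1

end NormalizedChiSquare

lemma exists_lt_or_lt_of_lt_abs_iSup_sub {ι : Type*} [Finite ι] {x : ι → ℝ} {c ε : ℝ} (i₀ : ι)
    (h : ε < |(⨆ i, x i) - c|) : (∃ i, c + ε < x i) ∨ x i₀ < c - ε := by
  have : Nonempty ι := ⟨i₀⟩
  rcases lt_abs.mp h with h | h
  · left
    by_contra! hle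
    linarith [ciSup_le hle]
  · right
    linarith [le_ciSup (Finite.bddAbove_range x) i₀]

theorem statement6_general
    (Ω : Type) [MeasurableSpace Ω] (μ : Measure Ω) [IsProbabilityMeasure μ]
    (n : ℕ) (hn : 0 < n)
    (S : Fin n → Ω → ℝ)
    (hchisq : ∀ i : Fin n,
      Measure.map (fun ω => (n : ℝ) * S i ω) μ = gammaMeasure ((n : ℝ) / 2) (1 / 2)) :
    ∀ ε : ℝ, 0 < ε → ε < 1 →
      μ {ω | ε < |(⨆ i : Fin n, S i ω) - 1|} ≤
        ENNReal.ofReal (((n : ℝ) + 1) * Real.exp (-(n * ε ^ 2) / (4 * (1 + ε)))) := by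
  intro ε hε0 hε1
  have hk : (0 : ℝ) < n := by exact_mod_cast hn
  set E := exp (-(n * ε ^ 2) / (4 * (1 + ε)))
  let i₀ : Fin n := ⟨0, hn⟩
  have hlow : μ {ω | S i₀ ω < 1 - ε} ≤ ENNReal.ofReal E := by
    refine (measure_lt_one_sub_le hk hε0.le hε1 (hchisq i₀)).trans
      (ENNReal.ofReal_le_ofReal (exp_le_exp.mpr ?_))
    rw [neg_div, neg_div, neg_le_neg_iff]
    exact div_le_div_of_nonneg_left (by positivity) (by norm_num) (by linarith)
  calc μ {ω | ε < |(⨆ i : Fin n, S i ω) - 1|}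
      ≤ μ ((⋃ i, {ω | 1 + ε < S i ω}) ∪ {ω | S i₀ ω < 1 - ε}) := measure_mono fun ω hω => by
        simpa using exists_lt_or_lt_of_lt_abs_iSup_sub i₀ hω
    _ ≤ ∑ i, μ {ω | 1 + ε < S i ω} + μ {ω | S i₀ ω < 1 - ε} :=
        (measure_union_le _ _).trans (add_le_add_left (measure_iUnion_fintype_le _ _) _)
    _ ≤ ∑ _ : Fin n, ENNReal.ofReal E + ENNReal.ofReal E :=
        add_le_add (Finset.sum_le_sum fun i _ => measure_one_add_lt_le hk hε0.le (hchisq i)) hlow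
    _ = ENNReal.ofReal ((n + 1) * E) := by
        rw [ENNReal.ofReal_mul (by positivity), ENNReal.ofReal_add hk.le zero_le_one]
        simp [add_mul]

/-- concentration of the maximum of `n` i.i.d. normalized chi-square
variables: if `n·Sᵢ ∼ χ²ₙ` are i.i.d., then for every `ε ∈ (0,1)`,
`P(|maxᵢ Sᵢ − 1| > ε) ≤ (n+1)·exp(−n ε²/(4(1+ε)))`. -/
theorem statement6
    (Ω : Type) [MeasurableSpace Ω] (μ : Measure Ω) [IsProbabilityMeasure μ]
    (n : ℕ) (hn : 0 < n)
    (S : Fin n → Ω → ℝ)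
    (hind : iIndepFun S μ)
    (hident : ∀ i j : Fin n, Measure.map (S i) μ = Measure.map (S j) μ)
    (hchisq : ∀ i : Fin n,
      Measure.map (fun ω => (n : ℝ) * S i ω) μ = gammaMeasure ((n : ℝ) / 2) (1 / 2)) :
    ∀ ε : ℝ, 0 < ε → ε < 1 →
      μ {ω | ε < |(⨆ i : Fin n, S i ω) - 1|} ≤
        ENNReal.ofReal (((n : ℝ) + 1) * Real.exp (-(n * ε ^ 2) / (4 * (1 + ε)))) :=
  statement6_general Ω μ n hn S hchisq
end

section
/- Let Y ∈ ℝ^{n×q}, X ∈ ℝ^{n×p} with XᵀX invertible, and λ > 0. With X_λ = XᵀX + λI_p, S_Y = Yᵀ(I_n − X X_λ^{−1}Xᵀ)Y, B̂ = (XᵀX)^{−1}XᵀY and W = Yᵀ(I_n − X(XᵀX)^{−1}Xᵀ)Y, one has S_Y = W + B̂ᵀ( λ^{−1}I_p + (XᵀX)^{−1} )^{−1} B̂ (the matrix λ^{−1}I_p + (XᵀX)^{−1} being positive definite, hence invertible). -/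
/-! Since `XᵀX` is positive definite, so is `λ⁻¹I + (XᵀX)⁻¹`. The Woodbury identity, applied to
`X_λ = XᵀX + I (λI) I`, gives `X_λ⁻¹ = (XᵀX)⁻¹ - (XᵀX)⁻¹(λ⁻¹I + (XᵀX)⁻¹)⁻¹(XᵀX)⁻¹`; substituting
this into `S_Y` and using the symmetry of `(XᵀX)⁻¹` splits off `W` and leaves exactly the
quadratic form `B̂ᵀ(λ⁻¹I + (XᵀX)⁻¹)⁻¹B̂`. -/

open Matrix

namespace Matrix

variable {m n : Type*} [Fintype m] [Fintype n] [DecidableEq n]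

theorem posDef_transpose_mul_self_of_isUnit_det (X : Matrix m n ℝ) (h : IsUnit (Xᵀ * X).det) :
    (Xᵀ * X).PosDef := by
  have hX := posSemidef_conjTranspose_mul_self X
  rw [conjTranspose_eq_transpose_of_trivial] at hX
  exact hX.posDef_iff_det_ne_zero.mpr h.ne_zero

theorem PosDef.smul_one_add_inv {A : Matrix n n ℝ} (hA : A.PosDef) {c : ℝ} (hc : 0 < c) :
    (c • (1 : Matrix n n ℝ) + A⁻¹).PosDef :=
  (PosDef.one.smul hc).add_posSemidef hA.inv.posSemidef

theorem inv_add_smul_one {K : Type*} [Field K] {A : Matrix n n K} (hA : IsUnit A) {c : K}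
    (hc : c ≠ 0) (h : IsUnit (c⁻¹ • (1 : Matrix n n K) + A⁻¹)) :
    (A + c • (1 : Matrix n n K))⁻¹ = A⁻¹ - A⁻¹ * (c⁻¹ • (1 : Matrix n n K) + A⁻¹)⁻¹ * A⁻¹ := by
  have hc1 : (c • (1 : Matrix n n K))⁻¹ = c⁻¹ • 1 := inv_eq_left_inv (by simp [smul_smul, hc])
  have hcU : IsUnit (c • (1 : Matrix n n K)) := (isUnit_iff_isUnit_det _).mpr (by simp [hc])
  simpa [hc1] using add_mul_mul_inv_eq_sub A 1 (c • 1) 1 hA hcU (by simpa [hc1] using h)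

end Matrix

/-- with `X_λ = XᵀX + λI`, `S_Y = Yᵀ(I − X X_λ⁻¹Xᵀ)Y`,
`B̂ = (XᵀX)⁻¹XᵀY` and `W = Yᵀ(I − X(XᵀX)⁻¹Xᵀ)Y`, one has
`S_Y = W + B̂ᵀ(λ⁻¹I + (XᵀX)⁻¹)⁻¹B̂`, the matrix `λ⁻¹I + (XᵀX)⁻¹` being positive
definite (hence invertible). -/
theorem statement8 (n p q : ℕ)
    (Y : Matrix (Fin n) (Fin q) ℝ) (X : Matrix (Fin n) (Fin p) ℝ)
    (hX : IsUnit (Xᵀ * X).det)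
    (lam : ℝ) (hlam : 0 < lam) :
    (lam⁻¹ • (1 : Matrix (Fin p) (Fin p) ℝ) + (Xᵀ * X)⁻¹).PosDef ∧
    Yᵀ * (1 - X * (Xᵀ * X + lam • (1 : Matrix (Fin p) (Fin p) ℝ))⁻¹ * Xᵀ) * Y
      = Yᵀ * (1 - X * (Xᵀ * X)⁻¹ * Xᵀ) * Y
        + ((Xᵀ * X)⁻¹ * Xᵀ * Y)ᵀ
          * (lam⁻¹ • (1 : Matrix (Fin p) (Fin p) ℝ) + (Xᵀ * X)⁻¹)⁻¹
          * ((Xᵀ * X)⁻¹ * Xᵀ * Y) := by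
  have hA := posDef_transpose_mul_self_of_isUnit_det X hX
  have hM := hA.smul_one_add_inv (inv_pos.mpr hlam)
  refine ⟨hM, ?_⟩
  have hAinv_symm : (Xᵀ * X)⁻¹ᵀ = (Xᵀ * X)⁻¹ := by
    rw [transpose_nonsing_inv, transpose_mul, transpose_transpose]
  rw [inv_add_smul_one hA.isUnit hlam.ne' hM.isUnit, transpose_mul, transpose_mul, hAinv_symm,
    transpose_transpose]
  simp only [Matrix.mul_sub, Matrix.sub_mul, Matrix.mul_one, Matrix.mul_assoc]
  abel
end

section
/- Let C be a q×q real symmetric matrix, u ∈ ℝ^q, s > 0, and δ₀ ≥ 0, and suppose that C − u uᵀ/(s+δ₀) is positive definite. Then for every δ ≥ δ₀ the matrix C − u uᵀ/(s+δ) is positive definite, and the function δ ↦ det( C − u uᵀ/(s+δ) ) is monotonically nondecreasing on [δ₀, ∞) (strictly increasing when u ≠ 0). -/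
/-!
By the matrix determinant lemma, `det (C - t • u uᵀ) = det C * (1 - t * uᵀ C⁻¹ u)`, an affine
function of `t` with slope `-det C * uᵀ C⁻¹ u`. Lowering `t` from `(s + δ₀)⁻¹` adds a positive
semidefinite multiple of `u uᵀ`, so positive definiteness persists; in particular `C` itself is
positive definite, the slope is `≤ 0` (`< 0` if `u ≠ 0`), and `t = (s + δ)⁻¹` decreases in `δ`.
-/

open Matrix

theorem Matrix.det_sub_smul_vecMulVec {n α : Type*} [Fintype n] [DecidableEq n] [CommRing α]
    {A : Matrix n n α} (hA : IsUnit A.det) (t : α) (u v : n → α) :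
    (A - t • vecMulVec u v).det = A.det * (1 - t * (v ⬝ᵥ A⁻¹ *ᵥ u)) := by
  have hrank_one :
      A - t • vecMulVec u v = A + replicateCol Unit (-t • u) * replicateRow Unit v := by
    rw [← vecMulVec_eq, smul_vecMulVec, neg_smul, sub_eq_add_neg]
  rw [hrank_one, det_add_replicateCol_mul_replicateRow hA, det_unique (_ + _), Matrix.mul_assoc,
    ← replicateCol_mulVec, add_apply, replicateRow_mul_replicateCol_apply, one_apply_eq,
    mulVec_smul, dotProduct_smul, smul_eq_mul, neg_mul, ← sub_eq_add_neg]

namespace Matrix.PosDef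

variable {n : Type*}

theorem sub_smul_of_le {A B : Matrix n n ℝ} {s t : ℝ} (hA : (A - t • B).PosDef)
    (hB : B.PosSemidef) (hst : s ≤ t) : (A - s • B).PosDef := by
  have hsplit : A - s • B = (A - t • B) + (t - s) • B := by rw [sub_smul]; abel
  exact hsplit ▸ hA.add_posSemidef (hB.smul (sub_nonneg.2 hst))

theorem sub_smul_vecMulVec_of_le [Fintype n] {A : Matrix n n ℝ} {u : n → ℝ} {s t : ℝ}
    (hA : (A - t • vecMulVec u u).PosDef) (hst : s ≤ t) : (A - s • vecMulVec u u).PosDef :=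
  hA.sub_smul_of_le (by simpa using posSemidef_vecMulVec_self_star u) hst

variable [Fintype n] [DecidableEq n] {C : Matrix n n ℝ}

theorem antitone_det_sub_smul_vecMulVec (hC : C.PosDef) (u : n → ℝ) :
    Antitone fun t : ℝ => (C - t • vecMulVec u u).det := by
  have hdet : 0 ≤ C.det := hC.det_pos.le
  have hquad : 0 ≤ u ⬝ᵥ C⁻¹ *ᵥ u := by simpa using hC.inv.posSemidef.dotProduct_mulVec_nonneg u
  intro a b hab
  simp only [det_sub_smul_vecMulVec hC.det_pos.ne'.isUnit]
  gcongr

theorem strictAnti_det_sub_smul_vecMulVec (hC : C.PosDef) {u : n → ℝ} (hu : u ≠ 0) :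
    StrictAnti fun t : ℝ => (C - t • vecMulVec u u).det := by
  have hdet : 0 < C.det := hC.det_pos
  have hquad : 0 < u ⬝ᵥ C⁻¹ *ᵥ u := by simpa using hC.inv.dotProduct_mulVec_pos hu
  intro a b hab
  simp only [det_sub_smul_vecMulVec hdet.ne'.isUnit]
  gcongr

end Matrix.PosDef

theorem statement10_general (q : ℕ) (C : Matrix (Fin q) (Fin q) ℝ)
    (u : Fin q → ℝ) (s δ₀ : ℝ) (hs : 0 < s) (hδ₀ : 0 ≤ δ₀)
    (hpd : (C - (s + δ₀)⁻¹ • vecMulVec u u).PosDef) :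
    (∀ δ : ℝ, δ₀ ≤ δ → (C - (s + δ)⁻¹ • vecMulVec u u).PosDef) ∧
    MonotoneOn (fun δ : ℝ => (C - (s + δ)⁻¹ • vecMulVec u u).det) (Set.Ici δ₀) ∧
    (u ≠ 0 →
      StrictMonoOn (fun δ : ℝ => (C - (s + δ)⁻¹ • vecMulVec u u).det) (Set.Ici δ₀)) := by
  have hpos : 0 < s + δ₀ := by linarith
  have hweight : StrictAntiOn (fun δ : ℝ => (s + δ)⁻¹) (Set.Ici δ₀) := fun a ha b _ hab =>
    inv_strictAnti₀ (by linarith [Set.mem_Ici.1 ha]) (by linarith)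
  have hC : C.PosDef := by simpa using hpd.sub_smul_vecMulVec_of_le (inv_nonneg.2 hpos.le)
  refine ⟨fun δ hδ => ?_, (hC.antitone_det_sub_smul_vecMulVec u).comp_antitoneOn hweight.antitoneOn,
    fun hu => (hC.strictAnti_det_sub_smul_vecMulVec hu).comp_strictAntiOn hweight⟩
  exact hpd.sub_smul_vecMulVec_of_le (hweight.antitoneOn Set.self_mem_Ici hδ hδ)

/-- if `C − u uᵀ/(s+δ₀)` is positive definite, then `C − u uᵀ/(s+δ)` is
positive definite for every `δ ≥ δ₀`, and `δ ↦ det(C − u uᵀ/(s+δ))` is monotonically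
nondecreasing on `[δ₀, ∞)` (strictly increasing when `u ≠ 0`). -/
theorem statement10 (q : ℕ) (C : Matrix (Fin q) (Fin q) ℝ) (hC : C.IsSymm)
    (u : Fin q → ℝ) (s δ₀ : ℝ) (hs : 0 < s) (hδ₀ : 0 ≤ δ₀)
    (hpd : (C - (s + δ₀)⁻¹ • vecMulVec u u).PosDef) :
    (∀ δ : ℝ, δ₀ ≤ δ → (C - (s + δ)⁻¹ • vecMulVec u u).PosDef) ∧
    MonotoneOn (fun δ : ℝ => (C - (s + δ)⁻¹ • vecMulVec u u).det) (Set.Ici δ₀) ∧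
    (u ≠ 0 →
      StrictMonoOn (fun δ : ℝ => (C - (s + δ)⁻¹ • vecMulVec u u).det) (Set.Ici δ₀)) :=
  statement10_general q C u s δ₀ hs hδ₀ hpd
end
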